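/- Let Z ⊂ ℙ²(ℂ) be the set of nine points (1:1:1), (1:−1:1), (−1:1:1), (−1:−1:1), (0:0:1), (1:0:0), (0:1:0), (1:1:0), (1:−1:0). Then dim_ℂ [I(Z)]_4 = 6, and for all points Q in some nonempty Zariski-open subset of ℙ² one has dim_ℂ [I(Z) ∩ I(Q)³]_4 > 0 = max{dim_ℂ [I(Z)]_4 − 6, 0}; that is, Z admits an unexpected quartic. -/

import Mathlib

/-!
Each of the nine points is cut out from the other eight by four lines of the `B₃` arrangement,
so the points impose independent conditions on quartics and `[I(Z)]₄` has dimension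
`15 - 9 = 6`. For the unexpected quartic: through every `(a:b:c)` there is an explicit quartic
containing `Z` of degree at least three in two lines through `(a:b:c)`, hence with a triple
point there. Its value at `(1:2:0)` is `-12 b³ c⁴`, so it is nonzero off the curve `y z = 0`.
-/

open MvPolynomial

noncomputable section

abbrev Pt : Type := Projectivization ℂ (Fin 3 → ℂ)
abbrev S3 : Type := MvPolynomial (Fin 3) ℂ

/-- The point `P` lies on the line with coefficient vector `L`. -/
def onLine (L P : Pt) : Prop := ∑ i, L.rep i * P.rep i = 0

/-- The number of lines of the arrangement `A` passing through the point `P`. -/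
def mult (A : Set Pt) (P : Pt) : ℕ := {L ∈ A | onLine L P}.ncard

/-- The singular points of the arrangement: points on at least two lines. -/
def Sing (A : Set Pt) : Set Pt := {P | 2 ≤ mult A P}

/-- The maximal multiplicity of a singular point of the arrangement. -/
def maxMult (A : Set Pt) : ℕ := sSup (mult A '' Sing A)

def Modular (A : Set Pt) (P : Pt) : Prop :=
  P ∈ Sing A ∧ ∀ Q ∈ Sing A, Q ≠ P → ∃ L ∈ A, onLine L P ∧ onLine L Q

def Supersolvable (A : Set Pt) : Prop := ∃ P, Modular A P

/-- The homogeneous radical ideal of a set of points. -/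
def vanishingIdeal (Z : Set Pt) : Ideal S3 where
  carrier := {f | ∀ (v : Fin 3 → ℂ) (hv : v ≠ 0), Projectivization.mk ℂ v hv ∈ Z → eval v f = 0}
  add_mem' := by
    intro f g hf hg v hv hvZ
    simp [hf v hv hvZ, hg v hv hvZ]
  zero_mem' := by
    intro v hv hvZ
    simp
  smul_mem' := by
    intro c f hf v hv hvZ
    simp [smul_eq_mul, hf v hv hvZ]

def pointIdeal (Q : Pt) : Ideal S3 := vanishingIdeal {Q}

def homogComponent (I : Ideal S3) (t : ℕ) : Submodule ℂ S3 :=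
  (Submodule.restrictScalars ℂ I) ⊓ homogeneousSubmodule (Fin 3) ℂ t

/-- `dim_ℂ [I]_t`. -/
def dimHomog (I : Ideal S3) (t : ℕ) : ℕ := Module.finrank ℂ (homogComponent I t)

/-- A property holds for all points in some nonempty Zariski-open subset of ℙ². -/
def Generically (Φ : Pt → Prop) : Prop :=
  ∃ g : S3, g ≠ 0 ∧ (∃ d, g.IsHomogeneous d) ∧ ∀ Q : Pt, eval Q.rep g ≠ 0 → Φ Q

/-- `Z` admits an unexpected curve of degree `j+1`. -/
def admitsUnexpectedDeg (Z : Set Pt) (j : ℕ) : Prop :=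
  Generically fun Q =>
    dimHomog (vanishingIdeal Z ⊓ pointIdeal Q ^ j) (j + 1) >
      max (dimHomog (vanishingIdeal Z) (j + 1) - j * (j + 1) / 2) 0

def AdmitsUnexpected (Z : Set Pt) : Prop := ∃ j, 1 ≤ j ∧ admitsUnexpectedDeg Z j

/-- The linear form defining the line `L`. -/
def linForm (L : Pt) : S3 := ∑ i, C (L.rep i) * X i

/-- The defining polynomial of a line arrangement. -/
def arrPoly (A : Set Pt) : S3 := ∏ᶠ L ∈ A, linForm L

/-- The arrangement `A` is free with exponents `(a, b)`. -/
def FreeWithExp (A : Set Pt) (a b : ℕ) : Prop :=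
  ∃ u v : Fin 3 → S3,
    (∑ i, u i * pderiv i (arrPoly A) = 0) ∧
    (∑ i, v i * pderiv i (arrPoly A) = 0) ∧
    (∀ i, (u i).IsHomogeneous a) ∧ (∀ i, (v i).IsHomogeneous b) ∧
    ∀ w : Fin 3 → S3, (∑ i, w i * pderiv i (arrPoly A) = 0) →
      ∃! pq : S3 × S3, w = pq.1 • u + pq.2 • v

def cvec (a b c : ℂ) : Fin 3 → ℂ := ![a, b, c]

lemma cvec_ne_zero₀ {a : ℂ} (h : a ≠ 0) (b c : ℂ) : cvec a b c ≠ 0 := by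
  intro H; exact h (by simpa [cvec] using congrFun H 0)

lemma cvec_ne_zero₁ (a : ℂ) {b : ℂ} (h : b ≠ 0) (c : ℂ) : cvec a b c ≠ 0 := by
  intro H; exact h (by simpa [cvec] using congrFun H 1)

lemma cvec_ne_zero₂ (a b : ℂ) {c : ℂ} (h : c ≠ 0) : cvec a b c ≠ 0 := by
  intro H; exact h (by simpa [cvec] using congrFun H 2)

def mkLine (a b c : ℂ) (h : cvec a b c ≠ 0) : Pt := Projectivization.mk ℂ (cvec a b c) h

/-- The nine points of the `B₃` configuration. -/
def Z14 : Set Pt :=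
  {mkLine 1 1 1 (cvec_ne_zero₀ (by norm_num) _ _),
   mkLine 1 (-1) 1 (cvec_ne_zero₀ (by norm_num) _ _),
   mkLine (-1) 1 1 (cvec_ne_zero₀ (by norm_num) _ _),
   mkLine (-1) (-1) 1 (cvec_ne_zero₀ (by norm_num) _ _),
   mkLine 0 0 1 (cvec_ne_zero₂ _ _ (by norm_num)),
   mkLine 1 0 0 (cvec_ne_zero₀ (by norm_num) _ _),
   mkLine 0 1 0 (cvec_ne_zero₁ _ (by norm_num) _),
   mkLine 1 1 0 (cvec_ne_zero₀ (by norm_num) _ _),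
   mkLine 1 (-1) 0 (cvec_ne_zero₀ (by norm_num) _ _)}

open Module Projectivization

theorem MvPolynomial.IsHomogeneous.eval_smul {σ R : Type*} [Fintype σ] [CommSemiring R]
    {f : MvPolynomial σ R} {n : ℕ} (hf : f.IsHomogeneous n) (t : R) (v : σ → R) :
    eval (t • v) f = t ^ n * eval v f := by
  rw [eval_eq', eval_eq', Finset.mul_sum]
  refine Finset.sum_congr rfl fun d hd => ?_
  have hdeg : ∑ i, d i = n := by
    rw [← Finsupp.degree_eq_sum, Finsupp.degree_eq_weight_one]
    exact hf (mem_support_iff.mp hd)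
  simp only [Pi.smul_apply, smul_eq_mul, mul_pow, Finset.prod_mul_distrib,
    Finset.prod_pow_eq_pow_sum, hdeg]
  ring

theorem MvPolynomial.finrank_homogeneousSubmodule {σ K : Type*} [Fintype σ] [Field K] (n : ℕ) :
    finrank K (homogeneousSubmodule σ K n) = (Fintype.card σ).multichoose n := by
  rw [homogeneousSubmodule_eq_finsupp_supported]
  refine (finrank_eq_nat_card_basis (basisRestrictSupport K {d : σ →₀ ℕ | d.degree = n})).trans ?_
  rw [← Nat.card_eq_fintype_card, ← Sym.natCard_sym_eq_multichoose]
  classical exact Nat.card_congr (Sym.equivNatSum σ n).symm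

instance MvPolynomial.finite_homogeneousSubmodule {σ K : Type*} [Finite σ] [Field K] (n : ℕ) :
    Module.Finite K (homogeneousSubmodule σ K n) :=
  Module.Finite.iff_fg.mpr (homogeneousSubmodule_fg (σ := σ) (R := K) n)

section ZeroLoci

variable {ι : Type*} {v : ι → Fin 3 → ℂ} {f : S3} {n : ℕ}

lemma eval_eq_zero_of_mk_eq_mk (hf : f.IsHomogeneous n) {w w' : Fin 3 → ℂ} (hw : w ≠ 0)
    (hw' : w' ≠ 0) (h : mk ℂ w hw = mk ℂ w' hw') (h' : eval w' f = 0) : eval w f = 0 := by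
  obtain ⟨t, rfl⟩ := (mk_eq_mk_iff' ℂ _ _ hw hw').mp h
  rw [hf.eval_smul, h', mul_zero]

lemma mem_vanishingIdeal_range_iff (hv : ∀ i, v i ≠ 0) (hf : f.IsHomogeneous n) :
    f ∈ vanishingIdeal (Set.range fun i => mk ℂ (v i) (hv i)) ↔ ∀ i, eval (v i) f = 0 := by
  refine ⟨fun h i => h _ _ ⟨i, rfl⟩, ?_⟩
  rintro h w hw ⟨i, hi⟩
  exact eval_eq_zero_of_mk_eq_mk hf hw (hv i) hi.symm (h i)

lemma mem_pointIdeal_iff {Q : Pt} (hf : f.IsHomogeneous n) :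
    f ∈ pointIdeal Q ↔ eval Q.rep f = 0 := by
  have hQ : ({Q} : Set Pt) = Set.range fun _ : Unit => mk ℂ Q.rep Q.rep_nonzero := by
    simp [mk_rep]
  rw [pointIdeal, hQ, mem_vanishingIdeal_range_iff _ hf]
  simp

end ZeroLoci

section PointConditions

variable {ι : Type*} (v : ι → Fin 3 → ℂ) (d : ℕ)

def evalForms : homogeneousSubmodule (Fin 3) ℂ d →ₗ[ℂ] ι → ℂ :=
  LinearMap.pi fun i => (aeval (v i)).toLinearMap ∘ₗ (homogeneousSubmodule (Fin 3) ℂ d).subtype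

variable {v d}

@[simp]
lemma evalForms_apply (f : homogeneousSubmodule (Fin 3) ℂ d) (i : ι) :
    evalForms v d f i = eval (v i) f := by
  simp [evalForms]

lemma homogComponent_vanishingIdeal_range (hv : ∀ i, v i ≠ 0) :
    homogComponent (vanishingIdeal (Set.range fun i => mk ℂ (v i) (hv i))) d =
      (LinearMap.ker (evalForms v d)).map (homogeneousSubmodule (Fin 3) ℂ d).subtype := by
  ext f
  simp only [homogComponent, Submodule.mem_inf, Submodule.restrictScalars_mem, Submodule.mem_map,
    LinearMap.mem_ker, Submodule.subtype_apply]
  constructor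
  · rintro ⟨hZ, hf⟩
    refine ⟨⟨f, hf⟩, funext fun i => ?_, rfl⟩
    simpa using (mem_vanishingIdeal_range_iff hv hf).1 hZ i
  · rintro ⟨g, hg, rfl⟩
    refine ⟨(mem_vanishingIdeal_range_iff hv g.2).2 fun i => ?_, g.2⟩
    simpa using congrFun hg i

lemma dimHomog_vanishingIdeal_range [Fintype ι] (hv : ∀ i, v i ≠ 0)
    (hsurj : Function.Surjective (evalForms v d)) :
    dimHomog (vanishingIdeal (Set.range fun i => mk ℂ (v i) (hv i))) d =
      Nat.multichoose 3 d - Fintype.card ι := by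
  have h := LinearMap.finrank_range_add_finrank_ker (evalForms v d)
  rw [LinearMap.range_eq_top.2 hsurj, finrank_top, finrank_fintype_fun_eq_card,
    finrank_homogeneousSubmodule, Fintype.card_fin] at h
  rw [dimHomog, homogComponent_vanishingIdeal_range, Submodule.finrank_map_subtype_eq]
  exact Nat.eq_sub_of_add_eq' h

lemma evalForms_surjective [Finite ι]
    (hsep : ∀ i, ∃ s ∈ homogeneousSubmodule (Fin 3) ℂ d, ∀ j, eval (v j) s = 0 ↔ j ≠ i) :
    Function.Surjective (evalForms v d) := by
  classical
  rw [← LinearMap.range_eq_top, eq_top_iff, ← (Pi.basisFun ℂ ι).span_eq, Submodule.span_le]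
  rintro _ ⟨i, rfl⟩
  obtain ⟨s, hs, hsep⟩ := hsep i
  have hsi : eval (v i) s ≠ 0 := fun h => (hsep i).1 h rfl
  refine ⟨(eval (v i) s)⁻¹ • ⟨s, hs⟩, funext fun j => ?_⟩
  by_cases hji : j = i
  · subst hji; simp [hsi]
  · simp [hji, (hsep j).2 hji]

end PointConditions

lemma dimHomog_pos {I : Ideal S3} {d : ℕ} {f : S3} (hI : f ∈ I) (hf : f.IsHomogeneous d)
    (h0 : f ≠ 0) : 0 < dimHomog I d := by
  have : Module.Finite ℂ (homogComponent I d) := Submodule.finiteDimensional_of_le inf_le_right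
  exact Module.finrank_pos_iff_exists_ne_zero.2 ⟨⟨f, hI, hf⟩, fun h => h0 (congrArg Subtype.val h)⟩

def b3Points : Fin 9 → Fin 3 → ℂ :=
  ![cvec 1 1 1, cvec 1 (-1) 1, cvec (-1) 1 1, cvec (-1) (-1) 1, cvec 0 0 1,
    cvec 1 0 0, cvec 0 1 0, cvec 1 1 0, cvec 1 (-1) 0]

lemma b3Points_ne_zero (i : Fin 9) : b3Points i ≠ 0 := by
  fin_cases i <;> simp [b3Points, cvec, funext_iff, Fin.forall_fin_succ]

lemma Z14_eq_range : Z14 = Set.range fun i => mk ℂ (b3Points i) (b3Points_ne_zero i) := by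
  ext P
  simp only [Z14, mkLine, Set.mem_insert_iff, Set.mem_singleton_iff, Set.mem_range,
    Fin.exists_fin_succ, Fin.exists_fin_zero]
  simp [b3Points, eq_comm]

def linearForm (a : Fin 3 → ℂ) : S3 := ∑ i, C (a i) * X i

lemma isHomogeneous_linearForm (a : Fin 3 → ℂ) : (linearForm a).IsHomogeneous 1 :=
  IsHomogeneous.sum _ _ _ fun i _ => isHomogeneous_C_mul_X (a i) i

lemma eval_linearForm (a v : Fin 3 → ℂ) : eval v (linearForm a) = a ⬝ᵥ v := by
  simp [linearForm, dotProduct]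

-- Row `i`: three lines of the `B₃` arrangement covering every point but the `i`-th, and a fourth
-- line not through it to reach degree four.
def separatorLines : Fin 9 → Fin 4 → Fin 3 → ℂ :=
  ![![cvec 1 0 1, cvec 1 1 0, cvec 0 0 1, cvec 1 0 1],
    ![cvec 1 0 1, cvec 1 (-1) 0, cvec 0 0 1, cvec 1 0 1],
    ![cvec 1 0 (-1), cvec 1 (-1) 0, cvec 0 0 1, cvec 1 0 (-1)],
    ![cvec 1 0 (-1), cvec 1 1 0, cvec 0 0 1, cvec 1 0 (-1)],
    ![cvec 1 0 (-1), cvec 1 0 1, cvec 0 0 1, cvec 1 0 (-1)],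
    ![cvec 1 0 (-1), cvec 1 (-1) 0, cvec 1 1 0, cvec 1 0 (-1)],
    ![cvec 0 1 (-1), cvec 1 (-1) 0, cvec 1 1 0, cvec 0 1 (-1)],
    ![cvec 1 0 (-1), cvec 0 1 1, cvec 1 1 0, cvec 1 0 (-1)],
    ![cvec 1 0 (-1), cvec 0 1 (-1), cvec 1 (-1) 0, cvec 1 0 (-1)]]

def separator (i : Fin 9) : S3 := ∏ k, linearForm (separatorLines i k)

lemma isHomogeneous_separator (i : Fin 9) : (separator i).IsHomogeneous 4 := by
  have h := IsHomogeneous.prod Finset.univ (fun k => linearForm (separatorLines i k)) (fun _ => 1)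
    fun k _ => isHomogeneous_linearForm _
  rwa [Finset.sum_const, Finset.card_univ, Fintype.card_fin, smul_eq_mul, mul_one] at h

lemma eval_separator_eq_zero_iff (i j : Fin 9) : eval (b3Points j) (separator i) = 0 ↔ j ≠ i := by
  simp only [separator, map_prod, eval_linearForm, Finset.prod_eq_zero_iff, Finset.mem_univ,
    true_and]
  fin_cases i <;> fin_cases j <;>
    simp [separatorLines, b3Points, cvec, dotProduct, Fin.sum_univ_three, Fin.exists_fin_succ]

lemma dimHomog_Z14 : dimHomog (vanishingIdeal Z14) 4 = 6 := by
  rw [Z14_eq_range, dimHomog_vanishingIdeal_range]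
  · simp [Nat.multichoose_eq, Nat.choose]
  · exact evalForms_surjective fun i =>
      ⟨separator i, isHomogeneous_separator i, fun j => eval_separator_eq_zero_iff i j⟩

section TriplePoint

variable {R σ : Type*} [CommSemiring R] {l₁ l₂ A B C' : MvPolynomial σ R}

lemma mem_pow_three_of_mem {J : Ideal (MvPolynomial σ R)} (h₁ : l₁ ∈ J) (h₂ : l₂ ∈ J) :
    l₂ ^ 3 * A + l₁ * l₂ ^ 2 * B + l₁ ^ 3 * C' ∈ J ^ 3 := by
  have h₁₂ : l₁ * l₂ ^ 2 ∈ J ^ 3 := by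
    rw [pow_succ' J 2]; exact Ideal.mul_mem_mul h₁ (Ideal.pow_mem_pow h₂ 2)
  exact add_mem (add_mem (Ideal.mul_mem_right _ _ (Ideal.pow_mem_pow h₂ 3))
    (Ideal.mul_mem_right _ _ h₁₂)) (Ideal.mul_mem_right _ _ (Ideal.pow_mem_pow h₁ 3))

lemma isHomogeneous_four_of_isHomogeneous_one (hl₁ : l₁.IsHomogeneous 1) (hl₂ : l₂.IsHomogeneous 1)
    (hA : A.IsHomogeneous 1) (hB : B.IsHomogeneous 1) (hC : C'.IsHomogeneous 1) :
    (l₂ ^ 3 * A + l₁ * l₂ ^ 2 * B + l₁ ^ 3 * C').IsHomogeneous 4 :=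
  (((hl₂.pow 3).mul hA).add ((hl₁.mul (hl₂.pow 2)).mul hB)).add ((hl₁.pow 3).mul hC)

end TriplePoint

lemma isHomogeneous_C_mul_X_sub_C_mul_X (a b : ℂ) (i j : Fin 3) :
    (C a * X i - C b * X j : S3).IsHomogeneous 1 :=
  (isHomogeneous_C_mul_X a i).sub (isHomogeneous_C_mul_X b j)

/-- `l₁` and `l₂` are the lines joining `(a:b:c)` to `(0:0:1)` and to `(1:0:0)`; every term has
degree at least three in them, which makes the triple point at `(a:b:c)` visible. -/
def unexpectedQuartic (a b c : ℂ) : S3 :=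
  let l₁ := C b * X 0 - C a * X 1
  let l₂ := C c * X 1 - C b * X 2
  l₂ ^ 3 * (C (2 * a * (a ^ 2 - b ^ 2)) * l₂ + C (2 * a * b * (a ^ 2 - b ^ 2)) * X 2
      + C (2 * c * (3 * a ^ 2 - b ^ 2)) * l₁)
    + l₁ * l₂ ^ 2 * (C (3 * b * c * (a ^ 2 - b ^ 2)) * X 2 + C (6 * a * c ^ 2) * l₁)
    + l₁ ^ 3 * (C (2 * c ^ 3) * l₂ + C (b * c * (b ^ 2 - c ^ 2)) * X 2)

lemma isHomogeneous_unexpectedQuartic (a b c : ℂ) : (unexpectedQuartic a b c).IsHomogeneous 4 := by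
  have hl₁ := isHomogeneous_C_mul_X_sub_C_mul_X b a 0 1
  have hl₂ := isHomogeneous_C_mul_X_sub_C_mul_X c b 1 2
  exact isHomogeneous_four_of_isHomogeneous_one hl₁ hl₂
    (((hl₂.C_mul _).add (isHomogeneous_C_mul_X _ 2)).add (hl₁.C_mul _))
    ((isHomogeneous_C_mul_X _ 2).add (hl₁.C_mul _))
    ((hl₂.C_mul _).add (isHomogeneous_C_mul_X _ 2))

lemma unexpectedQuartic_mem_pointIdeal_pow (Q : Pt) :
    unexpectedQuartic (Q.rep 0) (Q.rep 1) (Q.rep 2) ∈ pointIdeal Q ^ 3 := by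
  refine mem_pow_three_of_mem
    ((mem_pointIdeal_iff (isHomogeneous_C_mul_X_sub_C_mul_X _ _ 0 1)).2 ?_)
    ((mem_pointIdeal_iff (isHomogeneous_C_mul_X_sub_C_mul_X _ _ 1 2)).2 ?_)
  · simp [mul_comm]
  · simp [mul_comm]

lemma unexpectedQuartic_mem_vanishingIdeal_Z14 (a b c : ℂ) :
    unexpectedQuartic a b c ∈ vanishingIdeal Z14 := by
  rw [Z14_eq_range, mem_vanishingIdeal_range_iff _ (isHomogeneous_unexpectedQuartic a b c)]
  intro i
  fin_cases i <;> simp [unexpectedQuartic, b3Points, cvec, -mul_eq_zero] <;> ring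

lemma unexpectedQuartic_ne_zero {a b c : ℂ} (hb : b ≠ 0) (hc : c ≠ 0) :
    unexpectedQuartic a b c ≠ 0 := by
  have h : eval (cvec 1 2 0) (unexpectedQuartic a b c) = -12 * b ^ 3 * c ^ 4 := by
    simp [unexpectedQuartic, cvec]; ring
  intro h0
  rw [h0, map_zero] at h
  exact mul_ne_zero (mul_ne_zero (by norm_num) (pow_ne_zero 3 hb)) (pow_ne_zero 4 hc) h.symm

/-- The nine-point configuration `Z14` admits an unexpected quartic. -/
theorem stmt14 :
    dimHomog (vanishingIdeal Z14) 4 = 6 ∧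
    Generically fun Q =>
      dimHomog (vanishingIdeal Z14 ⊓ pointIdeal Q ^ 3) 4 >
        max (dimHomog (vanishingIdeal Z14) 4 - 6) 0 := by
  refine ⟨dimHomog_Z14, X 1 * X 2, mul_ne_zero (X_ne_zero 1) (X_ne_zero 2),
    ⟨2, (isHomogeneous_X ℂ 1).mul (isHomogeneous_X ℂ 2)⟩, fun Q hQ => ?_⟩
  obtain ⟨hb, hc⟩ : Q.rep 1 ≠ 0 ∧ Q.rep 2 ≠ 0 := by simpa using hQ
  rw [dimHomog_Z14, Nat.sub_self, max_self]
  exact dimHomog_pos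
    ⟨unexpectedQuartic_mem_vanishingIdeal_Z14 _ _ _, unexpectedQuartic_mem_pointIdeal_pow Q⟩
    (isHomogeneous_unexpectedQuartic _ _ _) (unexpectedQuartic_ne_zero hb hc)

end
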